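/- For all real a and γ, ∫_{-∞}^{γ} Φ(f)·φ(f; μ, σ²) df = BvN(μ/√(1+σ²), (γ−μ)/σ; −σ/√(1+σ²)), where φ(·;μ,σ²) is the N(μ,σ²) density. Equivalently, if f ~ N(μ,σ²) and y|f is Bernoulli with success probability Φ(f), then P(y=1, f ≤ γ) = BvN(μ/√(1+σ²), (γ−μ)/σ; −σ/√(1+σ²)). -/

import Mathlib

open MeasureTheory Real

/-- Standard normal density. -/
noncomputable def stdPdf (x : ℝ) : ℝ := (Real.sqrt (2 * Real.pi))⁻¹ * Real.exp (-x ^ 2 / 2)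

/-- Standard normal CDF. -/
noncomputable def stdCdf (t : ℝ) : ℝ := ∫ s in Set.Iic t, stdPdf s

/-- Owen's T function. -/
noncomputable def owenT (h a : ℝ) : ℝ :=
  (2 * Real.pi)⁻¹ * ∫ x in (0:ℝ)..a, Real.exp (-h ^ 2 * (1 + x ^ 2) / 2) / (1 + x ^ 2)

/-- Standard bivariate normal density with correlation ρ. -/
noncomputable def bvnPdf (ρ x y : ℝ) : ℝ :=
  Real.exp (-(x ^ 2 - 2 * ρ * x * y + y ^ 2) / (2 * (1 - ρ ^ 2))) /
    (2 * Real.pi * Real.sqrt (1 - ρ ^ 2))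

/-- Standard bivariate normal CDF with correlation ρ. -/
noncomputable def bvn (u v ρ : ℝ) : ℝ :=
  ∫ p : ℝ × ℝ in Set.Iic u ×ˢ Set.Iic v, bvnPdf ρ p.1 p.2

/-- General bivariate Gaussian density with means μ₁ μ₂, std devs σ₁ σ₂, covariance σ₁₂. -/
noncomputable def biGaussPdf (μ₁ μ₂ σ₁ σ₂ σ₁₂ x y : ℝ) : ℝ :=
  Real.exp (-(σ₂ ^ 2 * (x - μ₁) ^ 2 - 2 * σ₁₂ * (x - μ₁) * (y - μ₂) + σ₁ ^ 2 * (y - μ₂) ^ 2) /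
      (2 * (σ₁ ^ 2 * σ₂ ^ 2 - σ₁₂ ^ 2))) /
    (2 * Real.pi * Real.sqrt (σ₁ ^ 2 * σ₂ ^ 2 - σ₁₂ ^ 2))

/-! Substituting `f = σ t + μ` turns the left side into `∫_{t ≤ (γ - μ)/σ} Φ(σ t + μ) φ(t) dt`.
The bivariate normal density with correlation `ρ` factors as `φ(y)` times the `N(ρ y, 1 - ρ²)`
density in `x`, so integrating out `x ≤ u` first gives
`BvN(u, v; ρ) = ∫_{y ≤ v} φ(y) Φ((u - ρ y)/√(1 - ρ²)) dy`.
For `u = μ/√(1+σ²)` and `ρ = -σ/√(1+σ²)` the argument `(u - ρ y)/√(1 - ρ²)` is exactly `σ y + μ`. -/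

open Set

lemma setIntegral_Iic_comp_div_sub (g : ℝ → ℝ) {c : ℝ} (hc : 0 < c) (m u : ℝ) :
    ∫ x in Iic u, g ((x - m) / c) / c = ∫ t in Iic ((u - m) / c), g t := by
  have himage : (fun t => t * c + m) '' Iic ((u - m) / c) = Iic u := by
    ext x
    simp only [mem_image, mem_Iic]
    constructor
    · rintro ⟨t, ht, rfl⟩
      rw [le_div_iff₀ hc] at ht
      linarith
    · exact fun hx => ⟨(x - m) / c, by gcongr, by field_simp; ring⟩
  rw [← himage, integral_image_eq_integral_abs_deriv_smul (f := fun t => t * c + m)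
    (f' := fun _ => c) measurableSet_Iic
    (fun t _ => ((hasDerivAt_mul_const c).add_const m).hasDerivWithinAt)
    fun a _ b _ hab => by simpa [hc.ne'] using hab]
  refine setIntegral_congr_fun measurableSet_Iic fun t _ => ?_
  simp [abs_of_pos hc, hc.ne', mul_div_cancel₀]

lemma integrable_stdPdf : Integrable stdPdf := by
  have hpdf : stdPdf = ProbabilityTheory.gaussianPDFReal 0 1 := by
    ext x
    simp [stdPdf, ProbabilityTheory.gaussianPDFReal]
  exact hpdf ▸ ProbabilityTheory.integrable_gaussianPDFReal 0 1

lemma stdPdf_nonneg (x : ℝ) : 0 ≤ stdPdf x := by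
  unfold stdPdf
  positivity

lemma stdPdf_mul_stdPdf (a b : ℝ) : stdPdf a * stdPdf b = exp (-(a ^ 2 + b ^ 2) / 2) / (2 * π) := by
  have hsq : √(2 * π) * √(2 * π) = 2 * π := mul_self_sqrt (by positivity)
  rw [stdPdf, stdPdf, mul_mul_mul_comm, ← exp_add, ← mul_inv, hsq]
  ring_nf

lemma bvnPdf_eq_stdPdf_mul {ρ : ℝ} (hρ : ρ ^ 2 < 1) (x y : ℝ) :
    bvnPdf ρ x y = stdPdf y * (stdPdf ((x - ρ * y) / √(1 - ρ ^ 2)) / √(1 - ρ ^ 2)) := by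
  have h1 : 0 < 1 - ρ ^ 2 := by linarith
  have hs : 0 < √(1 - ρ ^ 2) := sqrt_pos.mpr h1
  have hexponent : y ^ 2 + ((x - ρ * y) / √(1 - ρ ^ 2)) ^ 2 =
      (x ^ 2 - 2 * ρ * x * y + y ^ 2) / (1 - ρ ^ 2) := by
    rw [div_pow, sq_sqrt h1.le]
    field_simp
    ring
  rw [← mul_div_assoc, stdPdf_mul_stdPdf, hexponent, bvnPdf]
  field_simp

lemma integrable_bvnPdf {ρ : ℝ} (hρ : ρ ^ 2 < 1) :
    Integrable (fun p : ℝ × ℝ => bvnPdf ρ p.1 p.2) (volume.prod volume) := by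
  have hs : 0 < √(1 - ρ ^ 2) := sqrt_pos.mpr (by linarith)
  simp_rw [bvnPdf_eq_stdPdf_mul hρ]
  refine (integrable_prod_iff' ?_).mpr ⟨.of_forall fun y => ?_, ?_⟩
  · exact Continuous.aestronglyMeasurable (by unfold stdPdf; fun_prop)
  · exact ((integrable_stdPdf.comp_div hs.ne').comp_sub_right (ρ * y)).div_const _
      |>.const_mul (stdPdf y)
  · simp_rw [Real.norm_of_nonneg (mul_nonneg (stdPdf_nonneg _)
      (div_nonneg (stdPdf_nonneg _) hs.le)), integral_const_mul,
      integral_sub_right_eq_self (fun x => stdPdf (x / √(1 - ρ ^ 2)) / √(1 - ρ ^ 2))]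
    exact integrable_stdPdf.mul_const _

lemma bvn_eq_integral_stdPdf_mul_stdCdf {ρ : ℝ} (hρ : ρ ^ 2 < 1) (u v : ℝ) :
    bvn u v ρ = ∫ y in Iic v, stdPdf y * stdCdf ((u - ρ * y) / √(1 - ρ ^ 2)) := by
  have hs : 0 < √(1 - ρ ^ 2) := sqrt_pos.mpr (by linarith)
  rw [bvn, Measure.volume_eq_prod, ← Measure.prod_restrict, integral_prod_symm]
  · refine setIntegral_congr_fun measurableSet_Iic fun y _ => ?_
    simp_rw [bvnPdf_eq_stdPdf_mul hρ, integral_const_mul, setIntegral_Iic_comp_div_sub stdPdf hs,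
      stdCdf]
  · rw [Measure.prod_restrict]
    exact (integrable_bvnPdf hρ).integrableOn

theorem stmt_11 (μ σ γ : ℝ) (hσ : 0 < σ) :
    ∫ f in Set.Iic γ, stdCdf f * (stdPdf ((f - μ) / σ) / σ) =
      bvn (μ / Real.sqrt (1 + σ ^ 2)) ((γ - μ) / σ) (-σ / Real.sqrt (1 + σ ^ 2)) := by
  set K := √(1 + σ ^ 2)
  have hK : K ^ 2 = 1 + σ ^ 2 := sq_sqrt (by positivity)
  have hK0 : 0 < K := by positivity
  have hρ : (-σ / K) ^ 2 < 1 := by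
    rw [div_pow, hK, div_lt_one (by positivity)]
    linarith
  have hs : √(1 - (-σ / K) ^ 2) = K⁻¹ := by
    rw [← sqrt_inv, div_pow, hK]
    congr 1
    field_simp
    ring
  rw [bvn_eq_integral_stdPdf_mul_stdCdf hρ, ← setIntegral_Iic_comp_div_sub _ hσ μ γ]
  refine setIntegral_congr_fun measurableSet_Iic fun f _ => ?_
  have harg : (μ / K - -σ / K * ((f - μ) / σ)) / K⁻¹ = f := by
    field_simp
    ring
  rw [hs, harg]
  ring
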